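/- Let c₁ > 0 and define G_{c₁,1}(y) = c₁/2 for 0 ≤ y < c₁ and M_{n,1}(p,y) = (2p/(4ⁿ(n-1)!))(p²-y²)^{n-1}. Then for each n ≥ 1, (Lⁿ_{c₁} G_{c₁,1})(y) := ∫_y^{c₁} M_{n,1}(p,y) G_{c₁,1}(p) dp = (c₁/(2·4ⁿ n!)) (c₁² - y²)ⁿ, and hence Σ_{n=0}^∞ (Lⁿ_{c₁}G_{c₁,1})(y) = (c₁/2) e^{(c₁/2)² - (y/2)²} for y ∈ [0, c₁). -/

import Mathlib

open Real MeasureTheory intervalIntegral Set Filter Topology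

/-- `M_{n,1}(p,y) = (2p/(4ⁿ(n-1)!))(p²-y²)^{n-1}`. -/
noncomputable def MnOne (n : ℕ) (p y : ℝ) : ℝ :=
  2 * p / (4 ^ n * (Nat.factorial (n - 1))) * (p ^ 2 - y ^ 2) ^ (n - 1)

/-- `(Lⁿ_{c₁}G_{c₁,1})(y)`: for `n = 0` it is `G_{c₁,1} = c₁/2`, and for `n ≥ 1`
it is `∫_y^{c₁} M_{n,1}(p,y)·(c₁/2) dp`. -/
noncomputable def LnG (c₁ : ℝ) (n : ℕ) (y : ℝ) : ℝ :=
  if n = 0 then c₁ / 2 else ∫ p in y..c₁, MnOne n p y * (c₁ / 2)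

/-! The integrand `M_{n,1}(p,y)·(c₁/2)` is, up to the constant, the `p`-derivative of
`(p² - y²)ⁿ`, which vanishes at `p = y`; so `Lⁿ G = (c₁/2)·xⁿ/n!` with `x = (c₁² - y²)/4`,
and the series over `n` is `(c₁/2)·exp x`. -/

theorem hasDerivAt_sq_sub_sq_pow (y p : ℝ) (n : ℕ) :
    HasDerivAt (fun p : ℝ => (p ^ 2 - y ^ 2) ^ n) (n * (p ^ 2 - y ^ 2) ^ (n - 1) * (2 * p)) p := by
  simpa using ((hasDerivAt_pow 2 p).sub_const (y ^ 2)).fun_pow n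

theorem hasDerivAt_LnG_primitive (c₁ y p : ℝ) {n : ℕ} (hn : 0 < n) :
    HasDerivAt (fun p : ℝ => c₁ / (2 * 4 ^ n * n.factorial) * (p ^ 2 - y ^ 2) ^ n)
      (MnOne n p y * (c₁ / 2)) p := by
  refine ((hasDerivAt_sq_sub_sq_pow y p n).const_mul _).congr_deriv ?_
  obtain ⟨m, rfl⟩ := Nat.exists_eq_add_of_lt hn
  simp only [MnOne, zero_add, Nat.add_sub_cancel, Nat.factorial_succ]
  push_cast
  field_simp

theorem LnG_of_pos (c₁ y : ℝ) {n : ℕ} (hn : 0 < n) :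
    LnG c₁ n y = c₁ / (2 * 4 ^ n * n.factorial) * (c₁ ^ 2 - y ^ 2) ^ n := by
  have hint : IntervalIntegrable (fun p => MnOne n p y * (c₁ / 2)) volume y c₁ :=
    Continuous.intervalIntegrable (by unfold MnOne; fun_prop) _ _
  rw [LnG, if_neg hn.ne', integral_eq_sub_of_hasDerivAt
    (fun p _ => hasDerivAt_LnG_primitive c₁ y p hn) hint]
  simp [hn.ne']

theorem LnG_eq_mul_pow_div_factorial (c₁ y : ℝ) (n : ℕ) :
    LnG c₁ n y = c₁ / 2 * (((c₁ ^ 2 - y ^ 2) / 4) ^ n / n.factorial) := by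
  rcases n.eq_zero_or_pos with rfl | hn
  · simp [LnG]
  · rw [LnG_of_pos c₁ y hn, div_pow]
    field_simp

theorem hasSum_LnG (c₁ y : ℝ) :
    HasSum (fun n => LnG c₁ n y) (c₁ / 2 * exp ((c₁ / 2) ^ 2 - (y / 2) ^ 2)) := by
  simp only [LnG_eq_mul_pow_div_factorial]
  rw [show (c₁ / 2) ^ 2 - (y / 2) ^ 2 = (c₁ ^ 2 - y ^ 2) / 4 by ring, Real.exp_eq_exp_ℝ]
  exact (NormedSpace.expSeries_div_hasSum_exp _).mul_left (c₁ / 2)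

theorem stmt12_general (c₁ : ℝ) :
    (∀ n : ℕ, 1 ≤ n → ∀ y ∈ Set.Ico (0:ℝ) c₁,
      LnG c₁ n y = c₁ / (2 * 4 ^ n * (Nat.factorial n)) * (c₁ ^ 2 - y ^ 2) ^ n) ∧
    (∀ y ∈ Set.Ico (0:ℝ) c₁,
      ∑' n : ℕ, LnG c₁ n y = (c₁ / 2) * Real.exp ((c₁/2) ^ 2 - (y/2) ^ 2)) :=
  ⟨fun _ hn y _ => LnG_of_pos c₁ y hn, fun y _ => (hasSum_LnG c₁ y).tsum_eq⟩

/-- For each `n ≥ 1`, `(Lⁿ_{c₁}G_{c₁,1})(y) = (c₁/(2·4ⁿ n!)) (c₁² - y²)ⁿ`, and hence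
`Σ_{n=0}^∞ (Lⁿ_{c₁}G_{c₁,1})(y) = (c₁/2) e^{(c₁/2)² - (y/2)²}` for `y ∈ [0, c₁)`. -/
theorem stmt12 (c₁ : ℝ) (hc₁ : 0 < c₁) :
    (∀ n : ℕ, 1 ≤ n → ∀ y ∈ Set.Ico (0:ℝ) c₁,
      LnG c₁ n y = c₁ / (2 * 4 ^ n * (Nat.factorial n)) * (c₁ ^ 2 - y ^ 2) ^ n) ∧
    (∀ y ∈ Set.Ico (0:ℝ) c₁,
      ∑' n : ℕ, LnG c₁ n y = (c₁ / 2) * Real.exp ((c₁/2) ^ 2 - (y/2) ^ 2)) :=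
  stmt12_general c₁
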